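/- arXiv:2509.10138 — 2 statements merged into one kernel-verified Lean document; each statement's English description precedes it below -/
import Mathlib

section
/- Let F be a satisfiable finite set of atomic comparisons over V, and let u and v be terms occurring in F. If F entails u < v, then either (a) there is a chain from u to v in F⁺ in which at least one link is strict (i.e., for some i, tᵢ < tᵢ₊₁ is in F⁺), or (b) there are two chains from u to v in F⁺ (not necessarily distinct) all of whose links are non-strict (of the form t ≤ t′ or an equality), together with a term z on the first chain and a term w on the second chain such that either z ≠ w is in F or z and w are distinct real constants. -/
namespace QC

/-- A term is a variable in `V` or a real constant. -/
inductive Term (V : Type) where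
  | var : V → Term V
  | const : ℝ → Term V

/-- The comparison relations `<, ≤, =, ≠`. -/
inductive Rel where
  | lt | le | eq | ne

/-- A comparison between two terms.  (`x ≥ c` is represented as `c ≤ x`, etc.) -/
structure Comp (V : Type) where
  rel : Rel
  lhs : Term V
  rhs : Term V

def Term.eval {V : Type} (σ : V → ℝ) : Term V → ℝ
  | .var x => σ x
  | .const c => c

def Rel.holds : Rel → ℝ → ℝ → Prop
  | .lt => fun a b => a < b
  | .le => fun a b => a ≤ b
  | .eq => fun a b => a = b
  | .ne => fun a b => a ≠ b

/-- An assignment `σ : V → ℝ` satisfies a comparison. -/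
def Comp.holds {V : Type} (a : Comp V) (σ : V → ℝ) : Prop :=
  a.rel.holds (a.lhs.eval σ) (a.rhs.eval σ)

def Term.isVar {V : Type} : Term V → Prop
  | .var _ => True
  | .const _ => False

/-- An atomic comparison: at least one side is a variable. -/
def IsAC {V : Type} (a : Comp V) : Prop := a.lhs.isVar ∨ a.rhs.isVar

/-- `σ` satisfies every comparison in the finite set `F`. -/
def Sat {V : Type} (F : Finset (Comp V)) (σ : V → ℝ) : Prop := ∀ a ∈ F, a.holds σ

/-- The real constant `c` occurs in `F`. -/
def ConstOccurs {V : Type} (F : Finset (Comp V)) (c : ℝ) : Prop :=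
  ∃ a ∈ F, a.lhs = Term.const c ∨ a.rhs = Term.const c

/-- The term `t` occurs in `F`. -/
def TermOccurs {V : Type} (F : Finset (Comp V)) (t : Term V) : Prop :=
  ∃ a ∈ F, a.lhs = t ∨ a.rhs = t

/-- `F⁺`: `F` together with `c < c'` for every pair of constants `c < c'` occurring in `F`. -/
def Fplus {V : Type} (F : Finset (Comp V)) : Set (Comp V) :=
  (↑F : Set (Comp V)) ∪
    {a : Comp V | ∃ c c' : ℝ, c < c' ∧ ConstOccurs F c ∧ ConstOccurs F c' ∧
      a = ⟨Rel.lt, Term.const c, Term.const c'⟩}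

/-- A chain link from `s` to `t` in `Fp`: `Fp` contains `s ≤ t`, `s < t`, or an
equality between `s` and `t` (in either orientation). -/
def Link {V : Type} (Fp : Set (Comp V)) (s t : Term V) : Prop :=
  (⟨Rel.le, s, t⟩ : Comp V) ∈ Fp ∨ (⟨Rel.lt, s, t⟩ : Comp V) ∈ Fp ∨
  (⟨Rel.eq, s, t⟩ : Comp V) ∈ Fp ∨ (⟨Rel.eq, t, s⟩ : Comp V) ∈ Fp

/-- A non-strict chain link: `s ≤ t` or an equality between `s` and `t` (either orientation). -/
def NSLink {V : Type} (Fp : Set (Comp V)) (s t : Term V) : Prop :=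
  (⟨Rel.le, s, t⟩ : Comp V) ∈ Fp ∨
  (⟨Rel.eq, s, t⟩ : Comp V) ∈ Fp ∨ (⟨Rel.eq, t, s⟩ : Comp V) ∈ Fp

/-- `t 0, …, t n` is a chain from `u` to `v` in `Fp`. -/
def IsChainSeq {V : Type} (Fp : Set (Comp V)) (u v : Term V) (n : ℕ)
    (t : Fin (n + 1) → Term V) : Prop :=
  t 0 = u ∧ t (Fin.last n) = v ∧ ∀ i : Fin n, Link Fp (t i.castSucc) (t i.succ)

/-- There is a chain from `u` to `v` in `Fp`. -/
def ChainFrom {V : Type} (Fp : Set (Comp V)) (u v : Term V) : Prop :=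
  ∃ (n : ℕ) (t : Fin (n + 1) → Term V), IsChainSeq Fp u v n t

/-!
Suppose neither alternative holds, fix a model `σ` of `F`, and let `⊑` be chain reachability in
`F⁺` with the extra edge `v → u`. Every comparison of `F` holds when read in the preorder `⊑`:
`t ⊑ s` for a link `s < t` would contradict `σ` or give a strict chain from `u` to `v`, and
`⊑`-equivalence of `s, t` with `s ≠ t` in `F` would force `σ s = σ t` or put `s` and `t` on two
non-strict chains from `u` to `v`. Since `F⁺` orders the constants as the reals do, the constants
can be kept fixed while the other terms are inserted one at a time into `ℝ`, monotonically for `⊑`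
and identifying only `⊑`-equivalent terms. The result is a model of `F` in which `v ≤ u`,
contradicting the entailment of `u < v`.
-/

open Relation

section Chains

variable {X : Type*} {R : X → X → Prop}

lemma exists_relSeries_of_reflTransGen {a b : X} (h : ReflTransGen R a b) :
    ∃ p : RelSeries {q : X × X | R q.1 q.2}, p.head = a ∧ p.last = b := by
  induction h with
  | refl => exact ⟨RelSeries.singleton _ a, rfl, rfl⟩
  | tail _ hcd ih =>
    obtain ⟨p, hp, rfl⟩ := ih
    exact ⟨p.snoc _ hcd, by simp [hp], by simp⟩

lemma exists_relSeries_mem_of_reflTransGen {u z v : X} (h₁ : ReflTransGen R u z)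
    (h₂ : ReflTransGen R z v) :
    ∃ p : RelSeries {q : X × X | R q.1 q.2}, p.head = u ∧ p.last = v ∧ ∃ i, p i = z := by
  obtain ⟨p, rfl, rfl⟩ := exists_relSeries_of_reflTransGen h₁
  obtain ⟨q, hq, rfl⟩ := exists_relSeries_of_reflTransGen h₂
  exact ⟨p.smash q hq.symm, RelSeries.head_smash _, RelSeries.last_smash _, _,
    RelSeries.smash_castLE _ (Fin.last _)⟩

lemma exists_relSeries_step_of_reflTransGen {S : X → X → Prop} (hSR : ∀ {x y}, S x y → R x y)
    {u a b v : X} (h₁ : ReflTransGen R u a) (hab : S a b) (h₂ : ReflTransGen R b v) :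
    ∃ p : RelSeries {q : X × X | R q.1 q.2}, p.head = u ∧ p.last = v ∧
      ∃ i : Fin p.length, S (p i.castSucc) (p i.succ) := by
  obtain ⟨p, rfl, rfl⟩ := exists_relSeries_of_reflTransGen h₁
  obtain ⟨q, rfl, rfl⟩ := exists_relSeries_of_reflTransGen h₂
  refine ⟨p.append q (hSR hab), RelSeries.head_append .., RelSeries.last_append ..,
    ⟨p.length, by simp⟩, ?_⟩
  have hp := RelSeries.append_apply_left p q (hSR hab) (Fin.last _)
  have hq := RelSeries.append_apply_right p q (hSR hab) 0
  convert hab using 1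
  · exact (congrArg _ (Fin.ext rfl)).trans hp
  · exact (congrArg _ (Fin.ext rfl)).trans hq

end Chains

section Edge

variable {X : Type*} (R : X → X → Prop) (b a : X)

/-- The reflexive-transitive closure of `R` with the edge `b → a` added: a path through the new
edge may as well use it only once. -/
def ReflTransGenWithEdge (s t : X) : Prop :=
  ReflTransGen R s t ∨ (ReflTransGen R s b ∧ ReflTransGen R a t)

instance : IsPreorder X (ReflTransGenWithEdge R b a) where
  refl _ := Or.inl .refl
  trans _ _ _
    | .inl h₁, .inl h₂ => .inl (h₁.trans h₂)
    | .inl h₁, .inr h₂ => .inr ⟨h₁.trans h₂.1, h₂.2⟩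
    | .inr h₁, .inl h₂ => .inr ⟨h₁.1, h₁.2.trans h₂⟩
    | .inr h₁, .inr h₂ => .inr ⟨h₁.1, h₂.2⟩

variable {R b a}

lemma ReflTransGenWithEdge.of_reflTransGen {s t : X} (h : ReflTransGen R s t) :
    ReflTransGenWithEdge R b a s t :=
  .inl h

lemma ReflTransGenWithEdge.edge : ReflTransGenWithEdge R b a b a :=
  .inr ⟨.refl, .refl⟩

lemma ReflTransGenWithEdge.antisymm_cases {s t : X} (h₁ : ReflTransGenWithEdge R b a s t)
    (h₂ : ReflTransGenWithEdge R b a t s) :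
    (ReflTransGen R s t ∧ ReflTransGen R t s) ∨
      (ReflTransGen R a s ∧ ReflTransGen R s b ∧ ReflTransGen R a t ∧ ReflTransGen R t b) := by
  rcases h₁ with h₁ | ⟨hsb, hat⟩ <;> rcases h₂ with h₂ | ⟨htb, has⟩
  · exact .inl ⟨h₁, h₂⟩
  · exact .inr ⟨has, h₁.trans htb, has.trans h₁, htb⟩
  · exact .inr ⟨hat.trans h₂, hsb, hat, h₂.trans hsb⟩
  · exact .inr ⟨has, hsb, hat, htb⟩

end Edge

lemma Finset.exists_between_notMem {α : Type*} [LinearOrder α] [DenselyOrdered α] [NoMaxOrder α]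
    [NoMinOrder α] [Nonempty α] (lo hi avoid : Finset α) (h : ∀ p ∈ lo, ∀ q ∈ hi, p < q) :
    ∃ x, (∀ p ∈ lo, p < x) ∧ (∀ q ∈ hi, x < q) ∧ x ∉ avoid := by
  obtain ⟨b, hlo, hhi⟩ := Finset.exists_between' lo hi h
  -- go below `b`, but above every avoided value that is below `b`
  obtain ⟨x, hxlo, hxb⟩ := Finset.exists_between' (lo ∪ avoid.filter (· < b)) {b} (by
    intro p hp q hq
    rw [Finset.mem_singleton.mp hq]
    rcases Finset.mem_union.mp hp with hp | hp
    · exact hlo p hp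
    · exact (Finset.mem_filter.mp hp).2)
  have hxb := hxb b (Finset.mem_singleton_self b)
  refine ⟨x, fun p hp => hxlo p (Finset.mem_union_left _ hp), fun q hq => hxb.trans (hhi q hq),
    fun hx => ?_⟩
  exact (hxlo x (Finset.mem_union_right _ (Finset.mem_filter.mpr ⟨hx, hxb⟩))).false

section Realize

variable {X : Type*} (P : X → X → Prop)

def RealizesOn (g : X → ℝ) (S : Finset X) : Prop :=
  ∀ s ∈ S, ∀ t ∈ S, (P s t → g s ≤ g t) ∧ (g s = g t → P s t)

variable {P}

lemma RealizesOn.update [DecidableEq X] [Std.Refl P] {g : X → ℝ} {S : Finset X}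
    (hg : RealizesOn P g S) {a : X} (ha : a ∉ S) {x : ℝ}
    (hx : ∀ t ∈ S, (P a t → x ≤ g t) ∧ (P t a → g t ≤ x) ∧ (x = g t → P a t ∧ P t a)) :
    RealizesOn P (Function.update g a x) (insert a S) := by
  have hS : ∀ t ∈ S, Function.update g a x t = g t := fun t ht =>
    Function.update_of_ne (ne_of_mem_of_not_mem ht ha) _ _
  intro s hs t ht
  rcases Finset.mem_insert.mp hs with rfl | hs' <;>
    rcases Finset.mem_insert.mp ht with rfl | ht'
  · simp [refl_of P]
  · simp only [Function.update_self, hS t ht']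
    exact ⟨(hx t ht').1, fun h => ((hx t ht').2.2 h).1⟩
  · simp only [Function.update_self, hS s hs']
    exact ⟨(hx s hs').2.1, fun h => ((hx s hs').2.2 h.symm).2⟩
  · simp only [hS s hs', hS t ht']
    exact hg s hs' t ht'

lemma RealizesOn.exists_update [DecidableEq X] [IsPreorder X P] {g : X → ℝ} {S : Finset X}
    (hg : RealizesOn P g S) {a : X} (ha : a ∉ S) :
    ∃ x, RealizesOn P (Function.update g a x) (insert a S) := by
  classical
  by_cases hequiv : ∃ e ∈ S, P e a ∧ P a e
  · obtain ⟨e, he, hea, hae⟩ := hequiv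
    refine ⟨g e, hg.update ha fun t ht => ⟨fun hat => (hg e he t ht).1 (trans_of P hea hat),
      fun hta => (hg t ht e he).1 (trans_of P hta hae), fun hgt => ?_⟩⟩
    exact ⟨trans_of P hae ((hg e he t ht).2 hgt), trans_of P ((hg t ht e he).2 hgt.symm) hea⟩
  push Not at hequiv
  obtain ⟨x, hlo, hhi, havoid⟩ := Finset.exists_between_notMem ((S.filter (P · a)).image g)
    ((S.filter (P a ·)).image g) (S.image g) (by
      simp only [Finset.mem_image, Finset.mem_filter]
      rintro _ ⟨s, ⟨hs, hsa⟩, rfl⟩ _ ⟨t, ⟨ht, hat⟩, rfl⟩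
      refine lt_of_le_of_ne ((hg s hs t ht).1 (trans_of P hsa hat)) fun hgst => ?_
      exact hequiv t ht (trans_of P ((hg t ht s hs).2 hgst.symm) hsa) hat)
  refine ⟨x, hg.update ha fun t ht => ⟨fun hat => ?_, fun hta => ?_, fun hxt => ?_⟩⟩
  · exact (hhi _ (Finset.mem_image_of_mem g (Finset.mem_filter.mpr ⟨ht, hat⟩))).le
  · exact (hlo _ (Finset.mem_image_of_mem g (Finset.mem_filter.mpr ⟨ht, hta⟩))).le
  · exact absurd (hxt ▸ Finset.mem_image_of_mem g ht) havoid

lemma RealizesOn.exists_extension [DecidableEq X] [IsPreorder X P] {g₀ : X → ℝ} {C : Finset X}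
    (h₀ : RealizesOn P g₀ C) (S : Finset X) :
    ∃ g, Set.EqOn g g₀ C ∧ RealizesOn P g (C ∪ S) := by
  induction S using Finset.induction_on with
  | empty => exact ⟨g₀, Set.eqOn_refl _ _, by simpa using h₀⟩
  | @insert a S _ ih =>
    obtain ⟨g, hgC, hg⟩ := ih
    rw [Finset.union_insert]
    by_cases ha : a ∈ C ∪ S
    · exact ⟨g, hgC, by rwa [Finset.insert_eq_of_mem ha]⟩
    obtain ⟨x, hx⟩ := hg.exists_update ha
    refine ⟨Function.update g a x, fun t ht => ?_, hx⟩
    rw [Function.update_of_ne (ne_of_mem_of_not_mem (Finset.mem_union_left S ht) ha)]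
    exact hgC ht

lemma RealizesOn.mono {g : X → ℝ} {S T : Finset X} (hg : RealizesOn P g S) (hTS : T ⊆ S) :
    RealizesOn P g T :=
  fun s hs t ht => hg s (hTS hs) t (hTS ht)

end Realize

def Rel.HoldsIn {X : Type*} (P : X → X → Prop) : Rel → X → X → Prop
  | .lt, s, t => P s t ∧ ¬ P t s
  | .le, s, t => P s t
  | .eq, s, t => P s t ∧ P t s
  | .ne, s, t => ¬ (P s t ∧ P t s)

lemma RealizesOn.holds {X : Type*} {P : X → X → Prop} {g : X → ℝ} {S : Finset X}
    (hg : RealizesOn P g S) {s t : X} (hs : s ∈ S) (ht : t ∈ S) {r : Rel}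
    (h : r.HoldsIn P s t) : r.holds (g s) (g t) := by
  cases r
  · exact lt_of_le_of_ne ((hg s hs t ht).1 h.1) fun he => h.2 ((hg t ht s hs).2 he.symm)
  · exact (hg s hs t ht).1 h
  · exact le_antisymm ((hg s hs t ht).1 h.1) ((hg t ht s hs).1 h.2)
  · exact fun he => h ⟨(hg s hs t ht).2 he, (hg t ht s hs).2 he.symm⟩

section Comparisons

variable {V : Type} {F : Finset (Comp V)}

open Classical in
noncomputable def terms (F : Finset (Comp V)) : Finset (Term V) :=
  F.image Comp.lhs ∪ F.image Comp.rhs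

lemma mem_terms {t : Term V} : t ∈ terms F ↔ TermOccurs F t := by
  simp only [terms, Finset.mem_union, Finset.mem_image, TermOccurs]
  constructor
  · rintro (⟨a, ha, rfl⟩ | ⟨a, ha, rfl⟩)
    exacts [⟨a, ha, .inl rfl⟩, ⟨a, ha, .inr rfl⟩]
  · rintro ⟨a, ha, rfl | rfl⟩
    exacts [.inl ⟨a, ha, rfl⟩, .inr ⟨a, ha, rfl⟩]

open Classical in
noncomputable def constTerms (F : Finset (Comp V)) : Finset (Term V) :=
  {t ∈ terms F | ∃ c, t = .const c}

open Classical in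
lemma mem_constTerms {t : Term V} : t ∈ constTerms F ↔ t ∈ terms F ∧ ∃ c, t = .const c :=
  Finset.mem_filter

lemma eval_eq_of_eqOn_constTerms {g : Term V → ℝ} (hg : Set.EqOn g (Term.eval 0) (constTerms F))
    {t : Term V} (ht : t ∈ terms F) : t.eval (fun x => g (.var x)) = g t := by
  cases t with
  | var x => rfl
  | const c => exact (hg (mem_constTerms.mpr ⟨ht, c, rfl⟩)).symm

lemma Sat.holds_of_mem_fplus {σ : V → ℝ} (hσ : Sat F σ) {a : Comp V} (ha : a ∈ Fplus F) :
    a.holds σ := by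
  rcases ha with ha | ⟨c, c', hlt, -, -, rfl⟩
  exacts [hσ a ha, hlt]

lemma Sat.eval_le_of_link {σ : V → ℝ} (hσ : Sat F σ) {s t : Term V} (h : Link (Fplus F) s t) :
    s.eval σ ≤ t.eval σ := by
  rcases h with h | h | h | h
  · exact hσ.holds_of_mem_fplus h
  · exact (hσ.holds_of_mem_fplus h).le
  · exact (hσ.holds_of_mem_fplus h).le
  · exact (hσ.holds_of_mem_fplus h).ge

lemma Sat.eval_le_of_reflTransGen {σ : V → ℝ} (hσ : Sat F σ) {s t : Term V}
    (h : ReflTransGen (Link (Fplus F)) s t) : s.eval σ ≤ t.eval σ := by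
  induction h with
  | refl => exact le_rfl
  | tail _ hlink ih => exact ih.trans (hσ.eval_le_of_link hlink)

lemma Link.nsLink {Fp : Set (Comp V)} {s t : Term V} (h : Link Fp s t)
    (hlt : (⟨Rel.lt, s, t⟩ : Comp V) ∉ Fp) : NSLink Fp s t := by
  unfold Link at h
  unfold NSLink
  tauto

variable (F) in
def ExistsStrictChain (u v : Term V) : Prop :=
  ∃ (n : ℕ) (t : Fin (n + 1) → Term V), IsChainSeq (Fplus F) u v n t ∧
    ∃ i : Fin n, (⟨Rel.lt, t i.castSucc, t i.succ⟩ : Comp V) ∈ Fplus F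

variable (F) in
def ExistsSeparatedNonstrictChains (u v : Term V) : Prop :=
  ∃ (n₁ : ℕ) (t₁ : Fin (n₁ + 1) → Term V) (n₂ : ℕ) (t₂ : Fin (n₂ + 1) → Term V),
    (t₁ 0 = u ∧ t₁ (Fin.last n₁) = v ∧
      ∀ i : Fin n₁, NSLink (Fplus F) (t₁ i.castSucc) (t₁ i.succ)) ∧
    (t₂ 0 = u ∧ t₂ (Fin.last n₂) = v ∧
      ∀ i : Fin n₂, NSLink (Fplus F) (t₂ i.castSucc) (t₂ i.succ)) ∧
    ∃ (i : Fin (n₁ + 1)) (j : Fin (n₂ + 1)),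
      ((⟨Rel.ne, t₁ i, t₂ j⟩ : Comp V) ∈ F ∨
        ∃ c c' : ℝ, t₁ i = Term.const c ∧ t₂ j = Term.const c' ∧ c ≠ c')

variable {u v : Term V}

lemma existsStrictChain_of_reflTransGen {a b : Term V} (h₁ : ReflTransGen (Link (Fplus F)) u a)
    (hab : (⟨Rel.lt, a, b⟩ : Comp V) ∈ Fplus F) (h₂ : ReflTransGen (Link (Fplus F)) b v) :
    ExistsStrictChain F u v := by
  obtain ⟨p, hu, hv, i, hi⟩ := exists_relSeries_step_of_reflTransGen
    (S := fun a b => (⟨Rel.lt, a, b⟩ : Comp V) ∈ Fplus F) (fun h => .inr (.inl h)) h₁ hab h₂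
  exact ⟨p.length, p, ⟨hu, hv, p.step⟩, i, hi⟩

lemma exists_nonstrict_chain_mem (hno : ¬ ExistsStrictChain F u v) {z : Term V}
    (h₁ : ReflTransGen (Link (Fplus F)) u z) (h₂ : ReflTransGen (Link (Fplus F)) z v) :
    ∃ (n : ℕ) (t : Fin (n + 1) → Term V),
      (t 0 = u ∧ t (Fin.last n) = v ∧ ∀ i : Fin n, NSLink (Fplus F) (t i.castSucc) (t i.succ)) ∧
      ∃ i, t i = z := by
  obtain ⟨p, hu, hv, hz⟩ := exists_relSeries_mem_of_reflTransGen h₁ h₂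
  refine ⟨p.length, p, ⟨hu, hv, fun i => (p.step i).nsLink fun hlt => ?_⟩, hz⟩
  exact hno ⟨p.length, p, ⟨hu, hv, p.step⟩, i, hlt⟩

lemma Sat.not_reflTransGenWithEdge_of_lt {σ : V → ℝ} (hσ : Sat F σ)
    (hno : ¬ ExistsStrictChain F u v) {s t : Term V} (hst : (⟨Rel.lt, s, t⟩ : Comp V) ∈ Fplus F) :
    ¬ ReflTransGenWithEdge (Link (Fplus F)) v u t s := by
  rintro (hts | ⟨htv, hus⟩)
  · exact (hσ.eval_le_of_reflTransGen hts).not_gt (hσ.holds_of_mem_fplus hst)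
  · exact hno (existsStrictChain_of_reflTransGen hus hst htv)

lemma Sat.not_reflTransGenWithEdge_of_ne {σ : V → ℝ} (hσ : Sat F σ)
    (hno : ¬ ExistsStrictChain F u v) (hnsep : ¬ ExistsSeparatedNonstrictChains F u v)
    {s t : Term V} (hst : (⟨Rel.ne, s, t⟩ : Comp V) ∈ F)
    (h₁ : ReflTransGenWithEdge (Link (Fplus F)) v u s t) :
    ¬ ReflTransGenWithEdge (Link (Fplus F)) v u t s := by
  intro h₂
  rcases h₁.antisymm_cases h₂ with ⟨hst', hts'⟩ | ⟨hus, hsv, hut, htv⟩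
  · exact hσ _ hst <|
      le_antisymm (hσ.eval_le_of_reflTransGen hst') (hσ.eval_le_of_reflTransGen hts')
  · obtain ⟨n₁, t₁, hchain₁, i, rfl⟩ := exists_nonstrict_chain_mem hno hus hsv
    obtain ⟨n₂, t₂, hchain₂, j, rfl⟩ := exists_nonstrict_chain_mem hno hut htv
    exact hnsep ⟨n₁, t₁, n₂, t₂, hchain₁, hchain₂, i, j, .inl hst⟩

lemma Sat.holdsIn_of_mem {σ : V → ℝ} (hσ : Sat F σ)
    (hno : ¬ ExistsStrictChain F u v) (hnsep : ¬ ExistsSeparatedNonstrictChains F u v)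
    {a : Comp V} (ha : a ∈ F) :
    a.rel.HoldsIn (ReflTransGenWithEdge (Link (Fplus F)) v u) a.lhs a.rhs := by
  obtain ⟨r, s, t⟩ := a
  have hmem : (⟨r, s, t⟩ : Comp V) ∈ Fplus F := Set.mem_union_left _ ha
  have link : ∀ {x y}, Link (Fplus F) x y → ReflTransGenWithEdge (Link (Fplus F)) v u x y :=
    fun h => .of_reflTransGen (.single h)
  cases r
  · exact ⟨link (.inr (.inl hmem)), hσ.not_reflTransGenWithEdge_of_lt hno hmem⟩
  · exact link (.inl hmem)
  · exact ⟨link (.inr (.inr (.inl hmem))), link (.inr (.inr (.inr hmem)))⟩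
  · exact fun h => hσ.not_reflTransGenWithEdge_of_ne hno hnsep ha h.1 h.2

lemma Sat.realizesOn_constTerms {σ : V → ℝ} (hσ : Sat F σ)
    (hno : ¬ ExistsStrictChain F u v) :
    RealizesOn (ReflTransGenWithEdge (Link (Fplus F)) v u) (Term.eval 0) (constTerms F) := by
  intro s hs t ht
  obtain ⟨hs, c, rfl⟩ := mem_constTerms.mp hs
  obtain ⟨ht, c', rfl⟩ := mem_constTerms.mp ht
  refine ⟨fun h => le_of_not_gt fun hlt => ?_, fun (h : c = c') => h ▸ refl_of _ _⟩
  exact hσ.not_reflTransGenWithEdge_of_lt hno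
    (Set.mem_union_right _ ⟨c', c, hlt, mem_terms.mp ht, mem_terms.mp hs, rfl⟩) h

lemma sat_of_realizesOn {P : Term V → Term V → Prop} {g : Term V → ℝ}
    (hg : RealizesOn P g (terms F)) (hgC : Set.EqOn g (Term.eval 0) (constTerms F))
    (hF : ∀ a ∈ F, a.rel.HoldsIn P a.lhs a.rhs) : Sat F (fun x => g (.var x)) := by
  intro a ha
  have hl : a.lhs ∈ terms F := mem_terms.mpr ⟨a, ha, .inl rfl⟩
  have hr : a.rhs ∈ terms F := mem_terms.mpr ⟨a, ha, .inr rfl⟩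
  unfold Comp.holds
  rw [eval_eq_of_eqOn_constTerms hgC hl, eval_eq_of_eqOn_constTerms hgC hr]
  exact hg.holds hl hr (hF a ha)

end Comparisons

theorem stmt1_general {V : Type} (F : Finset (Comp V))
    (hsat : ∃ σ : V → ℝ, Sat F σ)
    (u v : Term V)
    (hu : TermOccurs F u) (hv : TermOccurs F v)
    (hent : ∀ σ : V → ℝ, Sat F σ → u.eval σ < v.eval σ) :
    (∃ (n : ℕ) (t : Fin (n + 1) → Term V), IsChainSeq (Fplus F) u v n t ∧
      ∃ i : Fin n, (⟨Rel.lt, t i.castSucc, t i.succ⟩ : Comp V) ∈ Fplus F) ∨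
    (∃ (n₁ : ℕ) (t₁ : Fin (n₁ + 1) → Term V) (n₂ : ℕ) (t₂ : Fin (n₂ + 1) → Term V),
      (t₁ 0 = u ∧ t₁ (Fin.last n₁) = v ∧
        ∀ i : Fin n₁, NSLink (Fplus F) (t₁ i.castSucc) (t₁ i.succ)) ∧
      (t₂ 0 = u ∧ t₂ (Fin.last n₂) = v ∧
        ∀ i : Fin n₂, NSLink (Fplus F) (t₂ i.castSucc) (t₂ i.succ)) ∧
      ∃ (i : Fin (n₁ + 1)) (j : Fin (n₂ + 1)),
        ((⟨Rel.ne, t₁ i, t₂ j⟩ : Comp V) ∈ F ∨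
          ∃ c c' : ℝ, t₁ i = Term.const c ∧ t₂ j = Term.const c' ∧ c ≠ c')) := by
  classical
  obtain ⟨σ, hσ⟩ := hsat
  by_contra hcon
  obtain ⟨hno, hnsep⟩ := not_or.mp hcon
  obtain ⟨g, hgC, hg⟩ := (hσ.realizesOn_constTerms hno).exists_extension (terms F)
  have hg' := hg.mono Finset.subset_union_right
  have hgu : g u < g v := by
    have := hent _ (sat_of_realizesOn hg' hgC fun a ha => hσ.holdsIn_of_mem hno hnsep ha)
    rwa [eval_eq_of_eqOn_constTerms hgC (mem_terms.mpr hu),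
      eval_eq_of_eqOn_constTerms hgC (mem_terms.mpr hv)] at this
  exact hgu.not_ge ((hg' v (mem_terms.mpr hv) u (mem_terms.mpr hu)).1 .edge)

/-- clause 3 of the lemma on derivations from sets of ACs:
if a satisfiable finite set `F` of atomic comparisons entails `u < v`, then either
(a) there is a chain from `u` to `v` in `F⁺` with at least one strict link, or
(b) there are two non-strict chains from `u` to `v` in `F⁺` together with a term `z`
on the first and `w` on the second such that `z ≠ w` is in `F` or `z` and `w` are
distinct real constants. -/
theorem stmt1 {V : Type} (F : Finset (Comp V))
    (hAC : ∀ a ∈ F, IsAC a)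
    (hsat : ∃ σ : V → ℝ, Sat F σ)
    (u v : Term V)
    (hu : TermOccurs F u) (hv : TermOccurs F v)
    (hent : ∀ σ : V → ℝ, Sat F σ → u.eval σ < v.eval σ) :
    (∃ (n : ℕ) (t : Fin (n + 1) → Term V), IsChainSeq (Fplus F) u v n t ∧
      ∃ i : Fin n, (⟨Rel.lt, t i.castSucc, t i.succ⟩ : Comp V) ∈ Fplus F) ∨
    (∃ (n₁ : ℕ) (t₁ : Fin (n₁ + 1) → Term V) (n₂ : ℕ) (t₂ : Fin (n₂ + 1) → Term V),
      (t₁ 0 = u ∧ t₁ (Fin.last n₁) = v ∧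
        ∀ i : Fin n₁, NSLink (Fplus F) (t₁ i.castSucc) (t₁ i.succ)) ∧
      (t₂ 0 = u ∧ t₂ (Fin.last n₂) = v ∧
        ∀ i : Fin n₂, NSLink (Fplus F) (t₂ i.castSucc) (t₂ i.succ)) ∧
      ∃ (i : Fin (n₁ + 1)) (j : Fin (n₂ + 1)),
        ((⟨Rel.ne, t₁ i, t₂ j⟩ : Comp V) ∈ F ∨
          ∃ c c' : ℝ, t₁ i = Term.const c ∧ t₂ j = Term.const c' ∧ c ≠ c')) :=
  stmt1_general F hsat u v hu hv hent

end QC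
end

section
/- Let β be a satisfiable finite set of atomic comparisons over V and, for i = 1, …, k, let βᵢ be a finite nonempty set of closed semi-interval ACs of which at most one is an RSI (i.e., each member of βᵢ has the form x ≤ c, except possibly one member of the form x ≥ c). If β entails the disjunction ⋁ᵢ (⋀ βᵢ), then there exists i such that either (i) β entails every member of βᵢ, or (ii) there is exactly one e ∈ βᵢ such that β does not entail e, and β entails every member of βᵢ other than e. -/
/-!
Suppose the claim fails. Then every `βᵢ` contains a closed LSI `xᵢ ≤ cᵢ` that `β` does not
entail (otherwise all its non-entailed members would be its single RSI), so some solution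
`σᵢ` of `β` has `σᵢ xᵢ > cᵢ`. The pointwise maximum of the `σᵢ` still satisfies every
`<`, `≤` and `=` comparison of `β`, and moving it slightly towards a solution `σ₀` of `β`
repairs the `≠` comparisons, each of which fails for at most one point of the segment, while
keeping `xᵢ > cᵢ` for all `i`. The resulting solution of `β` satisfies no `βᵢ`.
-/

namespace QC

/-- A closed LSI comparison: `x ≤ c`. -/
def IsClosedLSI {V : Type} (a : Comp V) : Prop :=
  ∃ (x : V) (c : ℝ), a = ⟨Rel.le, Term.var x, Term.const c⟩

/-- An open LSI comparison: `x < c`. -/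
def IsOpenLSI {V : Type} (a : Comp V) : Prop :=
  ∃ (x : V) (c : ℝ), a = ⟨Rel.lt, Term.var x, Term.const c⟩

/-- A closed RSI comparison: `x ≥ c`, represented as `c ≤ x`. -/
def IsClosedRSI {V : Type} (a : Comp V) : Prop :=
  ∃ (x : V) (c : ℝ), a = ⟨Rel.le, Term.const c, Term.var x⟩

/-- An open RSI comparison: `x > c`, represented as `c < x`. -/
def IsOpenRSI {V : Type} (a : Comp V) : Prop :=
  ∃ (x : V) (c : ℝ), a = ⟨Rel.lt, Term.const c, Term.var x⟩

open Filter Topology AffineMap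

variable {V : Type}

def Entails (β : Finset (Comp V)) (e : Comp V) : Prop := ∀ σ : V → ℝ, Sat β σ → e.holds σ

theorem Term.eval_lineMap (u : Term V) (σ τ : V → ℝ) (t : ℝ) :
    u.eval (lineMap σ τ t) = lineMap (u.eval σ) (u.eval τ) t := by
  cases u with
  | var x => simp [Term.eval, lineMap_apply]
  | const c => simp [Term.eval]

theorem Term.eval_sup' {ι : Type*} (u : Term V) {s : Finset ι} (H : s.Nonempty)
    (σ : ι → V → ℝ) : u.eval (s.sup' H σ) = s.sup' H fun i => u.eval (σ i) := by
  cases u with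
  | var x => exact Finset.sup'_apply H σ x
  | const c => exact (Finset.sup'_const H c).symm

theorem Comp.holds_sup' {ι : Type*} {a : Comp V} (ha : a.rel ≠ .ne) {s : Finset ι}
    (H : s.Nonempty) {σ : ι → V → ℝ} (h : ∀ i ∈ s, a.holds (σ i)) : a.holds (s.sup' H σ) := by
  obtain ⟨r, l, l'⟩ := a
  have hle : ∀ i ∈ s, l'.eval (σ i) ≤ s.sup' H fun j => l'.eval (σ j) := fun i hi =>
    Finset.le_sup' (fun j => l'.eval (σ j)) hi
  cases r <;> simp only [Comp.holds, Rel.holds, Term.eval_sup'] at h ⊢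
  case lt => exact (Finset.sup'_lt_iff H).2 fun i hi => (h i hi).trans_le (hle i hi)
  case le => exact Finset.sup'_le H _ fun i hi => (h i hi).trans (hle i hi)
  case eq => exact Finset.sup'_congr H rfl h
  case ne => exact absurd rfl ha

theorem Comp.holds_lineMap {a : Comp V} (ha : a.rel ≠ .ne) {σ τ : V → ℝ} (hσ : a.holds σ)
    (hτ : a.holds τ) {t : ℝ} (ht : t ∈ Set.Ioo 0 1) : a.holds (lineMap σ τ t) := by
  obtain ⟨r, l, l'⟩ := a
  obtain ⟨ht₀, ht₁⟩ := ht
  cases r <;> simp only [Comp.holds, Rel.holds, Term.eval_lineMap, lineMap_apply_ring'] at hσ hτ ⊢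
  case lt => nlinarith [mul_pos (sub_pos.2 ht₁) (sub_pos.2 hσ), mul_pos ht₀ (sub_pos.2 hτ)]
  case le => nlinarith [mul_nonneg (sub_pos.2 ht₁).le (sub_nonneg.2 hσ),
      mul_nonneg ht₀.le (sub_nonneg.2 hτ)]
  case eq => rw [hσ, hτ]
  case ne => exact absurd rfl ha

theorem Comp.eventually_holds_lineMap_of_rel_eq_ne {a : Comp V} (ha : a.rel = .ne)
    (σ : V → ℝ) {τ : V → ℝ} (hτ : a.holds τ) : ∀ᶠ t in 𝓝[>] (0 : ℝ), a.holds (lineMap σ τ t) := by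
  obtain ⟨r, l, l'⟩ := a
  cases ha
  simp only [Comp.holds, Rel.holds, Term.eval_lineMap] at hτ ⊢
  by_cases hσ : l.eval σ = l'.eval σ
  · filter_upwards [self_mem_nhdsWithin] with t (ht : 0 < t) heq
    rw [hσ, lineMap_apply_ring', lineMap_apply_ring'] at heq
    exact hτ (sub_left_inj.1 (mul_left_cancel₀ ht.ne' (add_right_cancel heq)))
  · have hlim : Tendsto
        (fun t : ℝ => lineMap (l.eval σ) (l.eval τ) t - lineMap (l'.eval σ) (l'.eval τ) t)
        (𝓝[>] 0) (𝓝 (l.eval σ - l'.eval σ)) :=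
      ((lineMap_continuous.sub lineMap_continuous).tendsto' 0 _
        (by simp only [Pi.sub_apply, lineMap_apply_zero])).mono_left nhdsWithin_le_nhds
    filter_upwards [hlim.eventually_ne (sub_ne_zero.2 hσ)] with t ht
    exact sub_ne_zero.1 ht

theorem eventually_sat_lineMap {β : Finset (Comp V)} {σ τ : V → ℝ}
    (hσ : ∀ a ∈ β, a.rel ≠ .ne → a.holds σ) (hτ : Sat β τ) :
    ∀ᶠ t in 𝓝[>] (0 : ℝ), Sat β (lineMap σ τ t) := by
  refine (eventually_all_finset β).2 fun a ha => ?_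
  by_cases hne : a.rel = .ne
  · exact Comp.eventually_holds_lineMap_of_rel_eq_ne hne σ (hτ a ha)
  · filter_upwards [Ioo_mem_nhdsGT one_pos] with t ht
    exact Comp.holds_lineMap hne (hσ a ha hne) (hτ a ha) ht

theorem exists_sat_forall_lt {ι : Type*} [Fintype ι] {β : Finset (Comp V)}
    (hsat : ∃ σ, Sat β σ) (x : ι → V) (c : ι → ℝ) (h : ∀ i, ∃ σ, Sat β σ ∧ c i < σ (x i)) :
    ∃ σ, Sat β σ ∧ ∀ i, c i < σ (x i) := by
  obtain ⟨σ₀, hσ₀⟩ := hsat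
  cases isEmpty_or_nonempty ι with
  | inl _ => exact ⟨σ₀, hσ₀, isEmptyElim⟩
  | inr _ =>
    choose σ hσ hlt using h
    set σM := Finset.univ.sup' Finset.univ_nonempty σ
    have hσM : ∀ a ∈ β, a.rel ≠ .ne → a.holds σM := fun a ha hne =>
      Comp.holds_sup' hne _ fun i _ => hσ i a ha
    have hnear : ∀ i, ∀ᶠ t in 𝓝[>] (0 : ℝ), c i < lineMap σM σ₀ t (x i) := by
      intro i
      have hltM : c i < σM (x i) := (hlt i).trans_le (Finset.le_sup' σ (Finset.mem_univ i) (x i))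
      have hlim : Tendsto (fun t : ℝ => lineMap σM σ₀ t (x i)) (𝓝[>] 0) (𝓝 (σM (x i))) :=
        (((continuous_apply (x i)).comp (lineMap_continuous (p := σM) (q := σ₀))).tendsto' 0 _
          (by simp only [Function.comp_apply, lineMap_apply_zero])).mono_left nhdsWithin_le_nhds
      exact hlim.eventually_const_lt hltM
    obtain ⟨t, hτ, hτlt⟩ := ((eventually_sat_lineMap hσM hσ₀).and (eventually_all.2 hnear)).exists
    exact ⟨_, hτ, hτlt⟩

theorem entails_all_or_all_but_one_of_entails_closedLSI {β B : Finset (Comp V)}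
    (hSI : ∀ a ∈ B, IsClosedLSI a ∨ IsClosedRSI a)
    (hone : ∀ a ∈ B, ∀ b ∈ B, IsClosedRSI a → IsClosedRSI b → a = b)
    (hLSI : ∀ e ∈ B, IsClosedLSI e → Entails β e) :
    (∀ e ∈ B, Entails β e) ∨ ∃ e ∈ B, ¬ Entails β e ∧ ∀ e' ∈ B, e' ≠ e → Entails β e' := by
  have hRSI : ∀ e ∈ B, ¬ Entails β e → IsClosedRSI e := fun e he hn =>
    (hSI e he).resolve_left fun h => hn (hLSI e he h)
  by_cases hall : ∀ e ∈ B, Entails β e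
  · exact .inl hall
  push Not at hall
  obtain ⟨e, he, hn⟩ := hall
  refine .inr ⟨e, he, hn, fun e' he' hne => ?_⟩
  by_contra hn'
  exact hne (hone e' he' e he (hRSI e' he' hn') (hRSI e he hn))

theorem stmt9_general {V : Type} (β : Finset (Comp V))
    (hsat : ∃ σ : V → ℝ, Sat β σ)
    (k : ℕ) (B : Fin k → Finset (Comp V))
    (hSI : ∀ i, ∀ a ∈ B i, IsClosedLSI a ∨ IsClosedRSI a)
    (hone : ∀ i, ∀ a ∈ B i, ∀ b ∈ B i, IsClosedRSI a → IsClosedRSI b → a = b)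
    (hent : ∀ σ : V → ℝ, Sat β σ → ∃ i, ∀ a ∈ B i, a.holds σ) :
    ∃ i, (∀ e ∈ B i, ∀ σ : V → ℝ, Sat β σ → e.holds σ) ∨
      (∃ e ∈ B i, (¬ ∀ σ : V → ℝ, Sat β σ → e.holds σ) ∧
        ∀ e' ∈ B i, e' ≠ e → ∀ σ : V → ℝ, Sat β σ → e'.holds σ) := by
  by_contra hcon
  have hviol : ∀ i, ∃ x c, (⟨.le, .var x, .const c⟩ : Comp V) ∈ B i ∧
      ∃ σ, Sat β σ ∧ c < σ x := by
    intro i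
    by_contra! hLSI
    refine hcon ⟨i, entails_all_or_all_but_one_of_entails_closedLSI (hSI i) (hone i) ?_⟩
    rintro e he ⟨x, c, rfl⟩
    exact hLSI x c he
  choose x c hmem hlt using hviol
  obtain ⟨σ, hσ, hσlt⟩ := exists_sat_forall_lt hsat x c hlt
  obtain ⟨i, hi⟩ := hent σ hσ
  exact (hσlt i).not_ge (hi _ (hmem i))

/-- Proposition 7.1, RSI1 disjuncts: if a satisfiable `β` entails
`⋁ᵢ (⋀ βᵢ)` where each `βᵢ` consists of closed SI comparisons of which at most one
is an RSI, then for some `i` either `β` entails every member of `βᵢ`, or exactly one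
member of `βᵢ` is not entailed and all others are. -/
theorem stmt9 {V : Type} (β : Finset (Comp V))
    (hAC : ∀ a ∈ β, IsAC a)
    (hsat : ∃ σ : V → ℝ, Sat β σ)
    (k : ℕ) (B : Fin k → Finset (Comp V))
    (hBne : ∀ i, (B i).Nonempty)
    (hSI : ∀ i, ∀ a ∈ B i, IsClosedLSI a ∨ IsClosedRSI a)
    (hone : ∀ i, ∀ a ∈ B i, ∀ b ∈ B i, IsClosedRSI a → IsClosedRSI b → a = b)
    (hent : ∀ σ : V → ℝ, Sat β σ → ∃ i, ∀ a ∈ B i, a.holds σ) :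
    ∃ i, (∀ e ∈ B i, ∀ σ : V → ℝ, Sat β σ → e.holds σ) ∨
      (∃ e ∈ B i, (¬ ∀ σ : V → ℝ, Sat β σ → e.holds σ) ∧
        ∀ e' ∈ B i, e' ≠ e → ∀ σ : V → ℝ, Sat β σ → e'.holds σ) :=
  stmt9_general β hsat k B hSI hone hent

end QC
end
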